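/- Let G be a finite group and E ⊆ G × G an irreflexive relation. Then: (i) E is invariant under all left translations ((g,h) ↦ (kg,kh) for all k ∈ G) if and only if there exists a unique subset C ⊆ G∖{1} with E = {(g, ga) : g ∈ G, a ∈ C}; (ii) such a left-invariant E is additionally invariant under all right translations ((g,h) ↦ (gk,hk) for all k ∈ G) if and only if the corresponding subset C is stable under conjugation (Ad-stable), i.e. k⁻¹Ck = C for all k ∈ G. (This classifies the left-covariant, respectively bicovariant, differential calculi on the function algebra ℂ(G): invariant 1-forms are labelled by subsets of G∖{1}, respectively Ad-stable subsets of G∖{1}.) -/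

import Mathlib

/-!
A left-invariant relation is determined by the neighbours of `1`: translating by `g⁻¹` shows that
`(g, h) ∈ E` iff `(1, g⁻¹ * h) ∈ E`, so `E` is the Cayley relation of `C = {a | (1, a) ∈ E}`, and `C`
is recovered from any such description as the set of `a` with `(1, a) ∈ E`. Right translation by `k`
replaces the label `g⁻¹ * h` of an edge by its conjugate `k⁻¹ * (g⁻¹ * h) * k`, so a Cayley relation
is right-invariant exactly when its label set is closed under conjugation.
-/

section

variable {G : Type*} [Group G]

/-- The relation `{(g, g * a) | g ∈ G, a ∈ C}`. -/
def cayleyRel (C : Set G) : Set (G × G) := {p | p.1⁻¹ * p.2 ∈ C}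

def IsLeftInvariantRel (E : Set (G × G)) : Prop := ∀ k g h : G, (g, h) ∈ E ↔ (k * g, k * h) ∈ E

def IsRightInvariantRel (E : Set (G × G)) : Prop := ∀ k g h : G, (g, h) ∈ E ↔ (g * k, h * k) ∈ E

@[simp]
theorem mem_cayleyRel {C : Set G} {g h : G} : (g, h) ∈ cayleyRel C ↔ g⁻¹ * h ∈ C := Iff.rfl

theorem one_mem_cayleyRel_iff {C : Set G} {a : G} : (1, a) ∈ cayleyRel C ↔ a ∈ C := by
  simp

theorem isLeftInvariantRel_cayleyRel (C : Set G) : IsLeftInvariantRel (cayleyRel C) := by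
  intro k g h
  simp [mul_assoc]

theorem IsLeftInvariantRel.eq_cayleyRel {E : Set (G × G)} (hE : IsLeftInvariantRel E) :
    E = cayleyRel {a | (1, a) ∈ E} := by
  ext ⟨g, h⟩
  simpa using hE g⁻¹ g h

theorem isRightInvariantRel_cayleyRel_iff {C : Set G} :
    IsRightInvariantRel (cayleyRel C) ↔ ∀ a ∈ C, ∀ k : G, k⁻¹ * a * k ∈ C := by
  have conj_label (g h k : G) : (g * k)⁻¹ * (h * k) = k⁻¹ * (g⁻¹ * h) * k := by group
  simp only [IsRightInvariantRel, mem_cayleyRel, conj_label]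
  refine ⟨fun hR a ha k => by simpa using (hR k 1 a).mp (by simpa using ha), fun hC k g h => ?_⟩
  refine ⟨fun hx => hC _ hx k, fun hx => ?_⟩
  simpa [mul_assoc] using hC _ hx k⁻¹

end

theorem left_invariant_relations_on_finite_group
    (G : Type) [Group G]
    (E : Set (G × G)) (hE : ∀ g : G, (g, g) ∉ E) :
    ((∀ k g h : G, (g, h) ∈ E ↔ (k * g, k * h) ∈ E) ↔
      (∃! C : Set G, (1 : G) ∉ C ∧ E = {p : G × G | p.1⁻¹ * p.2 ∈ C})) ∧
    (∀ C : Set G, (1 : G) ∉ C → E = {p : G × G | p.1⁻¹ * p.2 ∈ C} →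
      ((∀ k g h : G, (g, h) ∈ E ↔ (g * k, h * k) ∈ E) ↔
        (∀ a ∈ C, ∀ k : G, k⁻¹ * a * k ∈ C))) := by
  refine ⟨⟨fun hL => ?_, ?_⟩, ?_⟩
  · refine ⟨{a | (1, a) ∈ E}, ⟨hE 1, IsLeftInvariantRel.eq_cayleyRel hL⟩, ?_⟩
    rintro C ⟨-, rfl⟩
    ext a
    exact one_mem_cayleyRel_iff.symm
  · rintro ⟨C, ⟨-, rfl⟩, -⟩
    exact isLeftInvariantRel_cayleyRel C
  · rintro C - rfl
    exact isRightInvariantRel_cayleyRel_iff
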